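/- Let M be a real constant and let φ₁ : (−1,1) → ℝ be a function satisfying (1−ξ²)·ξ·φ₁''(ξ) + (2−4ξ²)·φ₁'(ξ) − 2ξ·φ₁(ξ) − 2Mξ = 0 for all ξ ∈ (−1,1), with φ₁ extending continuously to [−1,1]. Then φ₁(ξ) = −M for all ξ. -/

import Mathlib

open Set

open Filter Topology

/-- Constancy from zero derivative on a convex set. -/
lemma const_of_hasDerivAt_zero {f : ℝ → ℝ} {s : Set ℝ} (hs : Convex ℝ s)
    (hf : ∀ x ∈ s, HasDerivAt f 0 x) {x y : ℝ} (hx : x ∈ s) (hy : y ∈ s) :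
    f x = f y := by
  have h := hs.norm_image_sub_le_of_norm_hasDerivWithin_le
    (f' := fun _ => (0 : ℝ)) (C := 0)
    (fun z hz => (hf z hz).hasDerivWithinAt) (fun z _ => by simp) hx hy
  simp only [zero_mul, norm_le_zero_iff, sub_eq_zero] at h
  exact h.symm

/-- Every smooth solution `φ₁` on `(−1, 1)` of
`(1−ξ²) ξ φ₁''(ξ) + (2−4ξ²) φ₁'(ξ) − 2 ξ φ₁(ξ) − 2 M ξ = 0`
that extends continuously to `[−1, 1]` is the constant `−M`. -/
theorem homogeneous_subleading_constant (M : ℝ) (φ₁ : ℝ → ℝ)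
    (hsmooth : ContDiffOn ℝ (⊤ : ℕ∞) φ₁ (Ioo (-1) 1))
    (hODE : ∀ ξ ∈ Ioo (-1 : ℝ) 1,
      (1 - ξ ^ 2) * ξ * deriv (deriv φ₁) ξ + (2 - 4 * ξ ^ 2) * deriv φ₁ ξ
        - 2 * ξ * φ₁ ξ - 2 * M * ξ = 0)
    (hcont : ContinuousOn φ₁ (Icc (-1) 1)) :
    ∀ ξ ∈ Icc (-1 : ℝ) 1, φ₁ ξ = -M := by
  have hopen : IsOpen (Ioo (-1 : ℝ) 1) := isOpen_Ioo
  have hconv : Convex ℝ (Ioo (-1 : ℝ) 1) := convex_Ioo _ _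
  have h0mem : (0 : ℝ) ∈ Ioo (-1 : ℝ) 1 := by constructor <;> norm_num
  -- first derivative facts
  have hsm1 : ContDiffOn ℝ (⊤ : ℕ∞) (deriv φ₁) (Ioo (-1) 1) := by
    have := hsmooth.deriv_of_isOpen hopen (m := (⊤ : ℕ∞)) (by simp)
    simpa using this
  have hd1 : ∀ x ∈ Ioo (-1 : ℝ) 1, HasDerivAt φ₁ (deriv φ₁ x) x := by
    intro x hx
    have : DifferentiableAt ℝ φ₁ x :=
      (hsmooth.contDiffAt (hopen.mem_nhds hx)).differentiableAt (by simp)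
    exact this.hasDerivAt
  have hd2 : ∀ x ∈ Ioo (-1 : ℝ) 1, HasDerivAt (deriv φ₁) (deriv (deriv φ₁) x) x := by
    intro x hx
    have : DifferentiableAt ℝ (deriv φ₁) x :=
      (hsm1.contDiffAt (hopen.mem_nhds hx)).differentiableAt (by simp)
    exact this.hasDerivAt
  -- the conserved quantity G
  have hGderiv : ∀ x ∈ Ioo (-1 : ℝ) 1,
      HasDerivAt (fun ξ => (1 - ξ ^ 2) * (φ₁ ξ + ξ * deriv φ₁ ξ + M)) 0 x := by
    intro x hx
    have h1 := hd1 x hx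
    have h2 := hd2 x hx
    have hA : HasDerivAt (fun ξ : ℝ => (1 - ξ ^ 2)) (-(2 * x)) x := by
      have : HasDerivAt (fun ξ : ℝ => (1 - ξ ^ 2)) (0 - 2 * x ^ 1) x :=
        (hasDerivAt_const x 1).sub ((hasDerivAt_pow 2 x).congr_deriv (by ring))
      simpa using this
    have hB : HasDerivAt (fun ξ => φ₁ ξ + ξ * deriv φ₁ ξ + M)
        (deriv φ₁ x + (1 * deriv φ₁ x + x * deriv (deriv φ₁) x) + 0) x := by
      have := (h1.add ((hasDerivAt_id x).mul h2)).add (hasDerivAt_const x M)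
      exact this
    have hmain := hA.mul hB
    refine hmain.congr_deriv ?_
    have hODEx := hODE x hx
    ring_nf
    ring_nf at hODEx
    linarith
  set C : ℝ := φ₁ 0 + M with hCdef
  have hGconst : ∀ x ∈ Ioo (-1 : ℝ) 1,
      (1 - x ^ 2) * (φ₁ x + x * deriv φ₁ x + M) = C := by
    intro x hx
    have := const_of_hasDerivAt_zero hconv hGderiv hx h0mem
    simpa [hCdef] using this
  -- the function K ξ = ξ φ₁ ξ + M ξ − (C/2)(log(1+ξ) − log(1−ξ)) has zero derivative
  have hKderiv : ∀ x ∈ Ioo (-1 : ℝ) 1, HasDerivAt (fun ξ => ξ * φ₁ ξ + M * ξ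
      - C / 2 * (Real.log (1 + ξ) - Real.log (1 - ξ))) 0 x := by
    intro x hx
    obtain ⟨hx1, hx2⟩ := hx
    have hp : (0 : ℝ) < 1 + x := by linarith
    have hm : (0 : ℝ) < 1 - x := by linarith
    have h1 := hd1 x ⟨hx1, hx2⟩
    have hL1 : HasDerivAt (fun ξ : ℝ => Real.log (1 + ξ)) (1 / (1 + x)) x := by
      have : HasDerivAt (fun ξ : ℝ => 1 + ξ) 1 x := by
        exact (hasDerivAt_id' x).const_add 1
      exact ((Real.hasDerivAt_log hp.ne').comp x this).congr_deriv (by ring)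
    have hL2 : HasDerivAt (fun ξ : ℝ => Real.log (1 - ξ)) (-(1 / (1 - x))) x := by
      have : HasDerivAt (fun ξ : ℝ => 1 - ξ) (-1) x := by
        exact (hasDerivAt_id' x).const_sub 1
      have := (Real.hasDerivAt_log hm.ne').comp x this
      exact this.congr_deriv (by ring)
    have hmain :=
      (((hasDerivAt_id x).mul h1).add ((hasDerivAt_const x M).mul (hasDerivAt_id x))).sub
        ((hasDerivAt_const x (C / 2)).mul (hL1.sub hL2))
    simp only [id_eq] at hmain
    refine hmain.congr_deriv ?_
    have hGx : (1 - x ^ 2) * (φ₁ x + x * deriv φ₁ x + M) = C :=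
      hGconst x ⟨hx1, hx2⟩
    have hne : (1 - x ^ 2) ≠ 0 := by nlinarith
    field_simp
    nlinarith [hGx]
  have hKconst : ∀ x ∈ Ioo (-1 : ℝ) 1,
      x * φ₁ x + M * x = C / 2 * (Real.log (1 + x) - Real.log (1 - x)) := by
    intro x hx
    have := const_of_hasDerivAt_zero hconv hKderiv hx h0mem
    simp only [mul_zero, zero_mul, Real.log_one, add_zero, sub_zero] at this
    have h0 : (0:ℝ) * φ₁ 0 + M * 0 - C / 2 * (Real.log (1 + 0) - Real.log (1 - 0)) = 0 := by
      norm_num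
    linarith [this, h0]
  -- boundedness of φ₁ on the compact interval
  obtain ⟨B, hB⟩ := (isCompact_Icc (a := (-1:ℝ)) (b := 1)).exists_bound_of_continuousOn hcont
  -- show C = 0
  have hCzero : C = 0 := by
    by_contra hCne
    set T : ℝ := 2 * (B + |M| + 1) / |C| with hT
    have hCpos : 0 < |C| := abs_pos.mpr hCne
    have hBnn : 0 ≤ B := le_trans (norm_nonneg _) (hB 0 (by constructor <;> norm_num))
    have hTpos : 0 < T := by positivity
    set x : ℝ := 1 - Real.exp (-T) with hx
    have hexp1 : Real.exp (-T) < 1 := Real.exp_lt_one_iff.mpr (by linarith)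
    have hexp0 : 0 < Real.exp (-T) := Real.exp_pos _
    have hxmem : x ∈ Ioo (-1 : ℝ) 1 := ⟨by simp only [hx]; linarith, by simp only [hx]; linarith⟩
    have hx0 : 0 < x := by simp only [hx]; linarith
    have hKx := hKconst x hxmem
    have hlog2 : Real.log (1 - x) = -T := by
      rw [hx]; simp [Real.log_exp]
    have hlog1 : 0 ≤ Real.log (1 + x) := Real.log_nonneg (by linarith)
    have heq : x * φ₁ x + M * x = C / 2 * (Real.log (1 + x) + T) := by
      rw [hKx, hlog2]; ring
    have hφbound : |φ₁ x| ≤ B := by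
      have := hB x (Ioo_subset_Icc_self hxmem)
      simpa [Real.norm_eq_abs] using this
    have hxa : |x| ≤ 1 := abs_le.mpr ⟨by linarith, le_of_lt hxmem.2⟩
    have hlhs : |x * φ₁ x + M * x| ≤ B + |M| := by
      have h1 : |x * φ₁ x + M * x| ≤ |x| * |φ₁ x| + |M| * |x| := by
        calc |x * φ₁ x + M * x| ≤ |x * φ₁ x| + |M * x| := abs_add_le _ _
          _ = |x| * |φ₁ x| + |M| * |x| := by rw [abs_mul, abs_mul]
      nlinarith [abs_nonneg (φ₁ x), abs_nonneg M, abs_nonneg x]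
    have hrhs : |C / 2 * (Real.log (1 + x) + T)| = |C| / 2 * (Real.log (1 + x) + T) := by
      rw [abs_mul, abs_div, abs_of_pos (by linarith : (0:ℝ) < Real.log (1 + x) + T)]
      norm_num
    have hge : |C| / 2 * T ≤ B + |M| := by
      have h1 : |C| / 2 * (Real.log (1 + x) + T) ≤ B + |M| := by
        rw [← hrhs, ← heq]; exact hlhs
      nlinarith [hlog1, hCpos]
    have hTval : |C| / 2 * T = B + |M| + 1 := by
      rw [hT]; field_simp
    linarith
  -- φ₁ = -M on the open interval
  have hopenEq : ∀ x ∈ Ioo (-1 : ℝ) 1, φ₁ x = -M := by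
    intro x hx
    rcases eq_or_ne x 0 with rfl | hxne
    · have : φ₁ 0 + M = 0 := by rw [← hCdef]; exact hCzero
      linarith
    · have hKx := hKconst x hx
      rw [hCzero] at hKx
      simp only [zero_div, zero_mul] at hKx
      have : x * (φ₁ x + M) = 0 := by linarith
      rcases mul_eq_zero.mp this with h | h
      · exact absurd h hxne
      · linarith
  -- extend to the closed interval by continuity
  intro ξ hξ
  rcases eq_or_ne ξ 1 with rfl | hne1
  · have hcw : ContinuousWithinAt φ₁ (Ioo (-1 : ℝ) 1) 1 :=
      (hcont 1 hξ).mono Ioo_subset_Icc_self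
    have hnb : (𝓝[Ioo (-1 : ℝ) 1] (1:ℝ)).NeBot := by
      rw [← mem_closure_iff_nhdsWithin_neBot, closure_Ioo (by norm_num : (-1:ℝ) ≠ 1)]
      exact hξ
    have h1 : Filter.Tendsto φ₁ (𝓝[Ioo (-1 : ℝ) 1] (1:ℝ)) (𝓝 (φ₁ 1)) := hcw
    have h2 : Filter.Tendsto φ₁ (𝓝[Ioo (-1 : ℝ) 1] (1:ℝ)) (𝓝 (-M)) := by
      apply Filter.Tendsto.congr' _ tendsto_const_nhds
      filter_upwards [self_mem_nhdsWithin] with y hy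
      exact (hopenEq y hy).symm
    exact tendsto_nhds_unique h1 h2
  rcases eq_or_ne ξ (-1) with rfl | hnem1
  · have hcw : ContinuousWithinAt φ₁ (Ioo (-1 : ℝ) 1) (-1) :=
      (hcont (-1) hξ).mono Ioo_subset_Icc_self
    have hnb : (𝓝[Ioo (-1 : ℝ) 1] (-1:ℝ)).NeBot := by
      rw [← mem_closure_iff_nhdsWithin_neBot, closure_Ioo (by norm_num : (-1:ℝ) ≠ 1)]
      exact hξ
    have h1 : Filter.Tendsto φ₁ (𝓝[Ioo (-1 : ℝ) 1] (-1:ℝ)) (𝓝 (φ₁ (-1))) := hcw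
    have h2 : Filter.Tendsto φ₁ (𝓝[Ioo (-1 : ℝ) 1] (-1:ℝ)) (𝓝 (-M)) := by
      apply Filter.Tendsto.congr' _ tendsto_const_nhds
      filter_upwards [self_mem_nhdsWithin] with y hy
      exact (hopenEq y hy).symm
    exact tendsto_nhds_unique h1 h2
  · exact hopenEq ξ ⟨lt_of_le_of_ne hξ.1 (Ne.symm hnem1), lt_of_le_of_ne hξ.2 hne1⟩
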